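/- If f is a boundary independent broadcast on a connected graph G and v is a broadcasting vertex with f(v) ≥ 2 that has a vertex u in its private boundary (d(u,v) = f(v) and u hears no other broadcasting vertex), then the broadcast f' with f'(v) = f(v) − 1, f'(u) = 1, and f'(w) = f(w) otherwise, is boundary independent with the same cost as f. -/

import Mathlib

/-!
Shrinking `f v` by one only weakens the constraints between broadcasting vertices, so it suffices
to check the new broadcast at `u`. Against `v` the constraint is `1 + (f v - 1) ≤ d(u, v) = f v`;
against any other broadcasting `w` it is `1 + f w ≤ d(u, w)`, which is exactly the statement that
`u` does not hear `w`. The cost is unchanged because `f u = 0` (`u` would otherwise hear itself).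
-/

open SimpleGraph Finset

/-- The eccentricity of a vertex: the maximum distance to any other vertex. -/
noncomputable def ecc {V : Type*} [Fintype V] (G : SimpleGraph V) (v : V) : ℕ :=
  Finset.univ.sup fun u => G.dist v u

/-- A broadcast: each vertex broadcasts with strength at most its eccentricity. -/
def IsBroadcast {V : Type*} [Fintype V] (G : SimpleGraph V) (f : V → ℕ) : Prop :=
  ∀ v, f v ≤ ecc G v

/-- A boundary independent broadcast. -/
def IsBnIndep {V : Type*} [Fintype V] (G : SimpleGraph V) (f : V → ℕ) : Prop :=
  IsBroadcast G f ∧ ∀ u v, u ≠ v → 1 ≤ f u → 1 ≤ f v → f u + f v ≤ G.dist u v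

/-- The maximum cost of a boundary independent broadcast. -/
noncomputable def alphaBn {V : Type*} [Fintype V] (G : SimpleGraph V) : ℕ :=
  sSup {k | ∃ f : V → ℕ, IsBnIndep G f ∧ ∑ v, f v = k}

/-- The independence number. -/
noncomputable def indepNum {V : Type*} [Fintype V] (G : SimpleGraph V) : ℕ :=
  sSup {k | ∃ s : Finset V, (∀ u ∈ s, ∀ v ∈ s, u ≠ v → ¬ G.Adj u v) ∧ s.card = k}

section

variable {V : Type*} [Fintype V]

theorem dist_le_ecc (G : SimpleGraph V) (v u : V) : G.dist v u ≤ ecc G v :=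
  Finset.le_sup (f := fun u => G.dist v u) (Finset.mem_univ u)

theorem IsBnIndep.mono {G : SimpleGraph V} {f g : V → ℕ} (hf : IsBnIndep G f) (hgf : g ≤ f) :
    IsBnIndep G g :=
  ⟨fun v => (hgf v).trans (hf.1 v), fun x y hxy hx hy =>
    (add_le_add (hgf x) (hgf y)).trans
      (hf.2 x y hxy (hx.trans (hgf x)) (hy.trans (hgf y)))⟩

theorem IsBnIndep.update [DecidableEq V] {G : SimpleGraph V} {g : V → ℕ} (hg : IsBnIndep G g)
    (u : V) {b : ℕ} (hb : b ≤ ecc G u)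
    (hcompat : ∀ w, w ≠ u → 1 ≤ g w → b + g w ≤ G.dist u w) :
    IsBnIndep G (Function.update g u b) := by
  refine ⟨fun x => ?_, fun x y hxy hx hy => ?_⟩
  · rcases eq_or_ne x u with rfl | hxu
    · simpa using hb
    · simpa [hxu] using hg.1 x
  · rcases eq_or_ne x u with rfl | hxu
    · have hyx := hxy.symm
      simp only [Function.update_self, Function.update_of_ne hyx] at hy ⊢
      exact hcompat y hyx hy
    rcases eq_or_ne y u with rfl | hyu
    · simp only [Function.update_self, Function.update_of_ne hxu] at hx ⊢
      rw [add_comm, dist_comm]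
      exact hcompat x hxu hx
    simp only [Function.update_of_ne hxu, Function.update_of_ne hyu] at hx hy ⊢
    exact hg.2 x y hxy hx hy

theorem Fintype.sum_update_add [DecidableEq V] {M : Type*} [AddCommMonoid M] (f : V → M) (i : V)
    (b : M) : ∑ x, Function.update f i b x + f i = ∑ x, f x + b := by
  rw [Finset.sum_update_of_mem (Finset.mem_univ i), ← Finset.erase_eq,
    ← Finset.sum_erase_add _ _ (Finset.mem_univ i), add_comm b, add_right_comm]

end

theorem bnIndep_shift_private_boundary_general {V : Type*} [Fintype V] [DecidableEq V]
    (G : SimpleGraph V) (f : V → ℕ) (hf : IsBnIndep G f)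
    (v u : V) (hv : 2 ≤ f v) (hd : G.dist u v = f v)
    (hpriv : ∀ w, w ≠ v → 1 ≤ f w → ¬ G.dist u w ≤ f w) :
    IsBnIndep G (Function.update (Function.update f v (f v - 1)) u 1) ∧
      ∑ x, Function.update (Function.update f v (f v - 1)) u 1 x = ∑ x, f x := by
  have huv : u ≠ v := by
    rintro rfl
    rw [dist_self] at hd
    omega
  have hfu : f u = 0 := by
    by_contra h
    exact hpriv u huv (Nat.one_le_iff_ne_zero.mpr h) (by rw [dist_self]; exact Nat.zero_le _)
  constructor
  · refine (hf.mono (update_le_iff.2 ⟨Nat.sub_le _ _, fun _ _ => le_rfl⟩)).update u ?_ ?_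
    · have hecc := dist_le_ecc G u v
      omega
    · intro w hwu hw
      rcases eq_or_ne w v with rfl | hwv
      · rw [Function.update_self]
        omega
      · rw [Function.update_of_ne hwv] at hw ⊢
        have hfar := hpriv w hwv hw
        omega
  · have hshift := Fintype.sum_update_add (Function.update f v (f v - 1)) u 1
    have hlower := Fintype.sum_update_add f v (f v - 1)
    rw [Function.update_of_ne huv, hfu] at hshift
    omega

theorem bnIndep_shift_private_boundary {V : Type*} [Fintype V] [DecidableEq V]
    (G : SimpleGraph V) (hG : G.Connected) (f : V → ℕ) (hf : IsBnIndep G f)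
    (v u : V) (hv : 2 ≤ f v) (hd : G.dist u v = f v)
    (hpriv : ∀ w, w ≠ v → 1 ≤ f w → ¬ G.dist u w ≤ f w) :
    IsBnIndep G (Function.update (Function.update f v (f v - 1)) u 1) ∧
      ∑ x, Function.update (Function.update f v (f v - 1)) u 1 x = ∑ x, f x :=
  bnIndep_shift_private_boundary_general G f hf v u hv hd hpriv
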